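/- The map f: ℚ_p → ℚ_p defined from Schneider's continued fraction expansion is an isometric embedding: |f(x) - f(y)|_p = |x - y|_p for all x, y ∈ ℚ_p. -/

import Mathlib

open scoped Classical in
noncomputable def eps {p : ℕ} [Fact p.Prime] (x : ℚ_[p]) : ℚ_[p] :=
  if x = 0 then 1 else (p : ℚ_[p]) ^ (-x.valuation) * x

noncomputable def fdigit {p : ℕ} [Fact p.Prime] (x : ℚ_[p]) : ℕ :=
  if h : ‖x‖ ≤ 1 then ((PadicInt.toZMod (⟨x, h⟩ : ℤ_[p])).val) else 0

noncomputable def tau {p : ℕ} [Fact p.Prime] (x : ℚ_[p]) : ℚ_[p] :=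
  1 / eps x - (fdigit (1 / eps x) : ℚ_[p])

noncomputable def sigma {p : ℕ} [Fact p.Prime] (x : ℚ_[p]) : ℚ_[p] :=
  eps x - (fdigit (eps x) : ℚ_[p])

/-- `f(x) = Σ_{n=0}^∞ ⌊1/ε(τⁿ x)⌋_p ∏_{m=0}^n τᵐ x / ε(τᵐ x)` -/
noncomputable def schneiderF {p : ℕ} [Fact p.Prime] (x : ℚ_[p]) : ℚ_[p] :=
  ∑' n : ℕ, (fdigit (1 / eps (tau^[n] x)) : ℚ_[p]) *
    ∏ m ∈ Finset.range (n + 1), (tau^[m] x) / eps (tau^[m] x)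

/-- Finite continued fraction `b 0 / (a 0 + b 1 / (a 1 + ⋯ + b n / (a n + x)))`. -/
noncomputable def cf {p : ℕ} [Fact p.Prime] : (ℕ → ℚ_[p]) → (ℕ → ℚ_[p]) → ℕ → ℚ_[p] → ℚ_[p]
  | a, b, 0, x => b 0 / (a 0 + x)
  | a, b, n + 1, x => b 0 / (a 0 + cf (fun i => a (i + 1)) (fun i => b (i + 1)) n x)

section lemmas
variable {p : ℕ} [hp : Fact p.Prime]

lemma pQ_ne_zero : (p : ℚ_[p]) ≠ 0 := Nat.cast_ne_zero.mpr hp.1.ne_zero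
lemma pR_pos : (0:ℝ) < (p:ℝ) := by exact_mod_cast hp.1.pos
lemma pR_one_lt : (1:ℝ) < (p:ℝ) := by exact_mod_cast hp.1.one_lt

lemma eps_ne_zero (x : ℚ_[p]) : eps x ≠ 0 := by
  unfold eps
  split
  · exact one_ne_zero
  · exact mul_ne_zero (zpow_ne_zero _ pQ_ne_zero) ‹_›

lemma norm_eps (x : ℚ_[p]) : ‖eps x‖ = 1 := by
  unfold eps
  split
  · simp
  · rename_i hx
    rw [norm_mul, Padic.norm_p_zpow, Padic.norm_eq_zpow_neg_valuation hx, neg_neg,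
      ← zpow_add₀ (ne_of_gt pR_pos), add_neg_cancel, zpow_zero]

lemma div_eps (x : ℚ_[p]) (hx : x ≠ 0) : x / eps x = (p : ℚ_[p]) ^ x.valuation := by
  have h := eps_ne_zero x
  rw [eps, if_neg hx] at h ⊢
  field_simp
  rw [zpow_neg, one_div, inv_inv]

end lemmas

section fdigit
variable {p : ℕ} [hp : Fact p.Prime]

lemma fdigit_def (z : ℚ_[p]) (h : ‖z‖ ≤ 1) :
    fdigit z = (PadicInt.toZMod (⟨z, h⟩ : ℤ_[p])).val := by
  unfold fdigit; rw [dif_pos h]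

lemma norm_sub_fdigit (z : ℚ_[p]) (h : ‖z‖ ≤ 1) :
    ‖z - (fdigit z : ℚ_[p])‖ ≤ (p:ℝ)⁻¹ := by
  haveI : NeZero p := ⟨hp.1.ne_zero⟩
  set w : ℤ_[p] := ⟨z, h⟩ with hw
  have hmem := PadicInt.toZMod_spec w
  rw [PadicInt.maximalIdeal_eq_span_p, Ideal.mem_span_singleton,
    ← PadicInt.norm_lt_one_iff_dvd] at hmem
  have hcast : (ZMod.cast (PadicInt.toZMod w) : ℤ_[p]) = ((PadicInt.toZMod w).val : ℤ_[p]) :=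
    (ZMod.natCast_val (R := ℤ_[p]) _).symm
  rw [hcast] at hmem
  have : ‖(w - ((PadicInt.toZMod w).val : ℤ_[p]) : ℤ_[p])‖ = ‖z - (fdigit z : ℚ_[p])‖ := by
    rw [PadicInt.norm_def, fdigit_def z h]
    push_cast
    rfl
  rw [this] at hmem
  have h2 := (Padic.norm_le_pow_iff_norm_lt_pow_add_one (z - (fdigit z : ℚ_[p])) (-1)).2
  rw [neg_add_cancel, zpow_zero] at h2
  have := h2 hmem
  rwa [zpow_neg_one] at this

lemma fdigit_ne_zero (z : ℚ_[p]) (h : ‖z‖ = 1) : fdigit z ≠ 0 := by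
  intro h0
  have h1 := norm_sub_fdigit z (le_of_eq h)
  rw [h0] at h1
  simp only [Nat.cast_zero, sub_zero] at h1
  rw [h] at h1
  exact absurd h1 (not_le.mpr (inv_lt_one_of_one_lt₀ pR_one_lt))

lemma norm_one_div_eps (x : ℚ_[p]) : ‖1 / eps x‖ = 1 := by
  rw [norm_div, norm_one, norm_eps, div_one]

lemma norm_tau_le (x : ℚ_[p]) : ‖tau x‖ ≤ (p:ℝ)⁻¹ :=
  norm_sub_fdigit _ (le_of_eq (norm_one_div_eps x))

lemma norm_fdigit (z : ℚ_[p]) (h : ‖z‖ = 1) : ‖(fdigit z : ℚ_[p])‖ = 1 := by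
  have h1 : ‖z - (fdigit z : ℚ_[p])‖ ≤ (p:ℝ)⁻¹ := norm_sub_fdigit z (le_of_eq h)
  have h2 : ‖z - (fdigit z : ℚ_[p])‖ < 1 :=
    lt_of_le_of_lt h1 (inv_lt_one_of_one_lt₀ pR_one_lt)
  have h3 : (fdigit z : ℚ_[p]) = z + -(z - (fdigit z : ℚ_[p])) := by ring
  rw [h3, Padic.add_eq_max_of_ne, norm_neg, h, max_eq_left (le_of_lt (h ▸ h2))]
  rw [norm_neg, h]; exact ne_of_gt h2

lemma b_add_tau (x : ℚ_[p]) : (fdigit (1 / eps x) : ℚ_[p]) + tau x = 1 / eps x := by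
  rw [tau]; ring

lemma norm_b_add_tau (x : ℚ_[p]) : ‖(fdigit (1 / eps x) : ℚ_[p]) + tau x‖ = 1 := by
  rw [b_add_tau, norm_one_div_eps]

lemma eps_eq_inv (x : ℚ_[p]) :
    eps x = ((fdigit (1 / eps x) : ℚ_[p]) + tau x)⁻¹ := by
  rw [b_add_tau, one_div, inv_inv]

lemma x_eq (x : ℚ_[p]) (hx : x ≠ 0) :
    x = (p : ℚ_[p]) ^ x.valuation * ((fdigit (1 / eps x) : ℚ_[p]) + tau x)⁻¹ := by
  rw [← eps_eq_inv, ← div_eps x hx, div_mul_cancel₀]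
  exact eps_ne_zero x

end fdigit

section series
variable {p : ℕ} [hp : Fact p.Prime]

/-- The n-th term of the Schneider series. -/
noncomputable def sc (x : ℚ_[p]) (n : ℕ) : ℚ_[p] :=
  (fdigit (1 / eps (tau^[n] x)) : ℚ_[p]) *
    ∏ m ∈ Finset.range (n + 1), (tau^[m] x) / eps (tau^[m] x)

lemma schneiderF_eq_tsum (x : ℚ_[p]) : schneiderF x = ∑' n, sc x n := rfl

lemma norm_div_eps_le (x : ℚ_[p]) : ‖x / eps x‖ ≤ ‖x‖ := by
  rw [norm_div, norm_eps, div_one]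

lemma norm_div_eps_eq (x : ℚ_[p]) : ‖x / eps x‖ = ‖x‖ := by
  rw [norm_div, norm_eps, div_one]

lemma norm_scprod_le (x : ℚ_[p]) (n : ℕ) :
    ‖∏ m ∈ Finset.range (n + 1), (tau^[m] x) / eps (tau^[m] x)‖ ≤ ‖x‖ * ((p:ℝ)⁻¹) ^ n := by
  induction n with
  | zero => simpa using norm_div_eps_le x
  | succ n ih =>
    rw [Finset.prod_range_succ, norm_mul]
    calc ‖∏ m ∈ Finset.range (n + 1), (tau^[m] x) / eps (tau^[m] x)‖ *
          ‖tau^[n+1] x / eps (tau^[n+1] x)‖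
        ≤ (‖x‖ * ((p:ℝ)⁻¹) ^ n) * (p:ℝ)⁻¹ := by
          apply mul_le_mul ih ?_ (norm_nonneg _)
            (mul_nonneg (norm_nonneg _) (pow_nonneg (by positivity) _))
          rw [norm_div_eps_eq, Function.iterate_succ_apply']
          exact norm_tau_le _
      _ = ‖x‖ * ((p:ℝ)⁻¹) ^ (n + 1) := by ring

lemma norm_fdigit_le (z : ℚ_[p]) : ‖(fdigit z : ℚ_[p])‖ ≤ 1 := by
  have := Padic.norm_int_le_one (p := p) (fdigit z : ℤ)
  push_cast at this
  exact this

lemma norm_sc_le (x : ℚ_[p]) (n : ℕ) : ‖sc x n‖ ≤ ‖x‖ * ((p:ℝ)⁻¹) ^ n := by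
  rw [sc, norm_mul]
  calc ‖(fdigit (1 / eps (tau^[n] x)) : ℚ_[p])‖ * ‖∏ m ∈ Finset.range (n + 1),
        (tau^[m] x) / eps (tau^[m] x)‖
      ≤ 1 * (‖x‖ * ((p:ℝ)⁻¹) ^ n) :=
        mul_le_mul (norm_fdigit_le _) (norm_scprod_le x n) (norm_nonneg _) zero_le_one
    _ = ‖x‖ * ((p:ℝ)⁻¹) ^ n := one_mul _

lemma summable_sc (x : ℚ_[p]) : Summable (sc x) := by
  apply Summable.of_norm_bounded (g := fun n => ‖x‖ * ((p:ℝ)⁻¹) ^ n)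
  · exact (summable_geometric_of_lt_one (by positivity)
      (inv_lt_one_of_one_lt₀ pR_one_lt)).mul_left _
  · exact norm_sc_le x

lemma sc_succ (x : ℚ_[p]) (n : ℕ) : sc x (n + 1) = (x / eps x) * sc (tau x) n := by
  rw [sc, sc]
  have hprod : ∏ m ∈ Finset.range (n + 2), (tau^[m] x) / eps (tau^[m] x)
      = (x / eps x) * ∏ m ∈ Finset.range (n + 1), (tau^[m] (tau x)) / eps (tau^[m] (tau x)) := by
    rw [Finset.prod_range_succ' (fun m => (tau^[m] x) / eps (tau^[m] x)) (n+1)]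
    simp only [Function.iterate_succ_apply, Function.iterate_zero_apply]
    rw [mul_comm]
  rw [hprod, Function.iterate_succ_apply]
  ring

lemma schneiderF_rec (x : ℚ_[p]) :
    schneiderF x = (x / eps x) * ((fdigit (1 / eps x) : ℚ_[p]) + schneiderF (tau x)) := by
  rw [schneiderF_eq_tsum, (summable_sc x).tsum_eq_zero_add]
  have h0 : sc x 0 = (x / eps x) * (fdigit (1 / eps x) : ℚ_[p]) := by
    rw [sc]; simp [Finset.prod_range_one]; ring
  have h1 : ∑' n, sc x (n + 1) = (x / eps x) * schneiderF (tau x) := by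
    rw [schneiderF_eq_tsum, ← tsum_mul_left]
    exact tsum_congr fun n => sc_succ x n
  rw [h0, h1]
  ring

lemma schneiderF_zero : schneiderF (0 : ℚ_[p]) = 0 := by
  rw [schneiderF_rec, zero_div, zero_mul]

end series

section normf
variable {p : ℕ} [hp : Fact p.Prime]

lemma norm_partial_sum_le (x : ℚ_[p]) (n : ℕ) : ‖∑ i ∈ Finset.range n, sc x i‖ ≤ ‖x‖ := by
  induction n with
  | zero => simp
  | succ n ih =>
    rw [Finset.sum_range_succ]
    refine le_trans (Padic.nonarchimedean _ _) (max_le ih ?_)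
    calc ‖sc x n‖ ≤ ‖x‖ * ((p:ℝ)⁻¹) ^ n := norm_sc_le x n
      _ ≤ ‖x‖ * 1 := by
          apply mul_le_mul_of_nonneg_left _ (norm_nonneg x)
          exact pow_le_one₀ (by positivity) (le_of_lt (inv_lt_one_of_one_lt₀ pR_one_lt))
      _ = ‖x‖ := mul_one _

lemma norm_schneiderF_le (x : ℚ_[p]) : ‖schneiderF x‖ ≤ ‖x‖ := by
  have hs : Filter.Tendsto (fun n => ∑ i ∈ Finset.range n, sc x i) Filter.atTop
      (nhds (schneiderF x)) := by
    rw [schneiderF_eq_tsum]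
    exact (summable_sc x).hasSum.tendsto_sum_nat
  have hn : Filter.Tendsto (fun n => ‖∑ i ∈ Finset.range n, sc x i‖) Filter.atTop
      (nhds ‖schneiderF x‖) := (continuous_norm.tendsto _).comp hs
  exact le_of_tendsto hn (Filter.Eventually.of_forall (norm_partial_sum_le x))

lemma norm_schneiderF_tau_lt (x : ℚ_[p]) : ‖schneiderF (tau x)‖ < 1 :=
  lt_of_le_of_lt (le_trans (norm_schneiderF_le _) (norm_tau_le x))
    (inv_lt_one_of_one_lt₀ pR_one_lt)

lemma norm_schneiderF (x : ℚ_[p]) : ‖schneiderF x‖ = ‖x‖ := by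
  by_cases hx : x = 0
  · rw [hx, schneiderF_zero, norm_zero]
  · rw [schneiderF_rec, norm_mul, norm_div_eps_eq]
    have hd : ‖(fdigit (1 / eps x) : ℚ_[p])‖ = 1 := norm_fdigit _ (norm_one_div_eps x)
    have hne : ‖(fdigit (1 / eps x) : ℚ_[p])‖ ≠ ‖schneiderF (tau x)‖ :=
      fun h => absurd (h ▸ norm_schneiderF_tau_lt x) (by rw [hd]; exact lt_irrefl 1)
    rw [Padic.add_eq_max_of_ne hne, hd,
      max_eq_left (le_of_lt (norm_schneiderF_tau_lt x)), mul_one]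

end normf

section core
variable {p : ℕ} [hp : Fact p.Prime]

lemma fdigit_lt (z : ℚ_[p]) : fdigit z < p := by
  haveI : NeZero p := ⟨hp.1.ne_zero⟩
  unfold fdigit
  split
  · exact ZMod.val_lt _
  · exact hp.1.pos

lemma norm_digit_sub {dx dy : ℕ} (hx : dx < p) (hy : dy < p) (hne : dx ≠ dy) :
    ‖(dx : ℚ_[p]) - (dy : ℚ_[p])‖ = 1 := by
  have heq : ((((dx:ℤ) - dy) : ℤ) : ℚ_[p]) = (dx : ℚ_[p]) - dy := by push_cast; ring
  have h1 : ‖((((dx:ℤ) - dy) : ℤ) : ℚ_[p])‖ ≤ 1 := Padic.norm_int_le_one _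
  have h2 : ¬ ‖((((dx:ℤ) - dy) : ℤ) : ℚ_[p])‖ < 1 := by
    rw [Padic.norm_intCast_lt_one_iff]
    intro hdvd
    have := Int.eq_zero_of_dvd_of_natAbs_lt_natAbs hdvd (by omega)
    omega
  rw [← heq]
  exact le_antisymm h1 (not_lt.mp h2)

lemma val_eq_of_norm_eq {x y : ℚ_[p]} (hx : x ≠ 0) (hy : y ≠ 0) (h : ‖x‖ = ‖y‖) :
    y.valuation = x.valuation := by
  rw [Padic.norm_eq_zpow_neg_valuation hx, Padic.norm_eq_zpow_neg_valuation hy] at h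
  have := zpow_right_injective₀ pR_pos (ne_of_gt pR_one_lt) h
  omega

lemma norm_sub_eq (x y : ℚ_[p]) (hx : x ≠ 0) (hy : y ≠ 0) (hv : y.valuation = x.valuation) :
    ‖x - y‖ = (p:ℝ) ^ (-x.valuation) *
      ‖((fdigit (1 / eps y) : ℚ_[p]) + tau y) - ((fdigit (1 / eps x) : ℚ_[p]) + tau x)‖ := by
  set a : ℚ_[p] := (fdigit (1 / eps x) : ℚ_[p]) + tau x with ha
  set b : ℚ_[p] := (fdigit (1 / eps y) : ℚ_[p]) + tau y with hb
  have ha1 : ‖a‖ = 1 := norm_b_add_tau x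
  have hb1 : ‖b‖ = 1 := norm_b_add_tau y
  have ha0 : a ≠ 0 := fun h => by simp [h] at ha1
  have hb0 : b ≠ 0 := fun h => by simp [h] at hb1
  obtain ⟨v, hvx⟩ : ∃ v, x.valuation = v := ⟨_, rfl⟩
  have hxv : x = (p : ℚ_[p]) ^ v * a⁻¹ := by rw [← hvx, ha]; exact x_eq x hx
  have hyv : y = (p : ℚ_[p]) ^ v * b⁻¹ := by rw [← hvx, ← hv, hb]; exact x_eq y hy
  rw [hvx]
  have hxy : x - y = (p : ℚ_[p]) ^ v * ((b - a) * (a⁻¹ * b⁻¹)) := by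
    rw [hxv, hyv]
    field_simp
  rw [hxy, norm_mul, Padic.norm_p_zpow, norm_mul, norm_mul, norm_inv, norm_inv,
    ha1, hb1]
  ring

lemma norm_fsub_eq (x y : ℚ_[p]) (hx : x ≠ 0) (hy : y ≠ 0) (hv : y.valuation = x.valuation) :
    ‖schneiderF x - schneiderF y‖ = (p:ℝ) ^ (-x.valuation) *
      ‖((fdigit (1 / eps x) : ℚ_[p]) + schneiderF (tau x)) -
        ((fdigit (1 / eps y) : ℚ_[p]) + schneiderF (tau y))‖ := by
  rw [schneiderF_rec x, schneiderF_rec y, div_eps x hx, div_eps y hy, hv, ← mul_sub,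
    norm_mul, Padic.norm_p_zpow]

end core

section main
variable {p : ℕ} [hp : Fact p.Prime]

lemma norm_small_sub_small {u w : ℚ_[p]} (hu : ‖u‖ ≤ (p:ℝ)⁻¹) (hw : ‖w‖ ≤ (p:ℝ)⁻¹) :
    ‖u - w‖ ≤ (p:ℝ)⁻¹ := by
  rw [sub_eq_add_neg]
  refine le_trans (Padic.nonarchimedean _ _) (max_le hu ?_)
  rwa [norm_neg]

lemma norm_digit_add_small {dx dy : ℕ} (hx : dx < p) (hy : dy < p) (hd : dx ≠ dy)
    {u w : ℚ_[p]} (hu : ‖u‖ ≤ (p:ℝ)⁻¹) (hw : ‖w‖ ≤ (p:ℝ)⁻¹) :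
    ‖((dx : ℚ_[p]) + u) - ((dy : ℚ_[p]) + w)‖ = 1 := by
  have h1 : ((dx : ℚ_[p]) + u) - ((dy : ℚ_[p]) + w) = ((dx : ℚ_[p]) - dy) + (u - w) := by ring
  have hsmall : ‖u - w‖ < 1 :=
    lt_of_le_of_lt (norm_small_sub_small hu hw) (inv_lt_one_of_one_lt₀ pR_one_lt)
  have hne : ‖(dx : ℚ_[p]) - (dy : ℚ_[p])‖ ≠ ‖u - w‖ := by
    rw [norm_digit_sub hx hy hd]
    exact ne_of_gt hsmall
  rw [h1, Padic.add_eq_max_of_ne hne, norm_digit_sub hx hy hd,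
    max_eq_left (le_of_lt hsmall)]

lemma norm_schneiderF_tau_le (x : ℚ_[p]) : ‖schneiderF (tau x)‖ ≤ (p:ℝ)⁻¹ :=
  le_trans (norm_schneiderF_le _) (norm_tau_le x)

lemma key_core (x y : ℚ_[p]) (hx : x ≠ 0) (hy : y ≠ 0) (hnorm : ‖x‖ = ‖y‖)
    (Hsame : fdigit (1 / eps x) = fdigit (1 / eps y) →
      ‖schneiderF (tau x) - schneiderF (tau y)‖ = ‖tau x - tau y‖) :
    ‖schneiderF x - schneiderF y‖ = ‖x - y‖ := by
  have hv := val_eq_of_norm_eq hx hy hnorm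
  rw [norm_fsub_eq x y hx hy hv, norm_sub_eq x y hx hy hv]
  congr 1
  by_cases hd : fdigit (1 / eps x) = fdigit (1 / eps y)
  · rw [hd]
    simp only [add_sub_add_left_eq_sub]
    rw [norm_sub_rev (tau y) (tau x)]
    exact Hsame hd
  · rw [norm_digit_add_small (fdigit_lt _) (fdigit_lt _) hd
      (norm_schneiderF_tau_le x) (norm_schneiderF_tau_le y),
      norm_digit_add_small (fdigit_lt _) (fdigit_lt _) (Ne.symm hd)
      (norm_tau_le y) (norm_tau_le x)]

lemma aux_cases (x y : ℚ_[p])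
    (H : x ≠ 0 → y ≠ 0 → x ≠ y → ‖x‖ = ‖y‖ →
      ‖schneiderF x - schneiderF y‖ = ‖x - y‖) :
    ‖schneiderF x - schneiderF y‖ = ‖x - y‖ := by
  by_cases hxy : x = y
  · rw [hxy, sub_self, sub_self]
  by_cases hx : x = 0
  · rw [hx, schneiderF_zero, zero_sub, zero_sub, norm_neg, norm_neg, norm_schneiderF]
  by_cases hy : y = 0
  · rw [hy, schneiderF_zero, sub_zero, sub_zero, norm_schneiderF]
  by_cases hn : ‖x‖ = ‖y‖
  · exact H hx hy hxy hn
  · have h1 : ‖schneiderF x‖ ≠ ‖-schneiderF y‖ := by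
      rw [norm_neg, norm_schneiderF, norm_schneiderF]; exact hn
    have h2 : ‖x‖ ≠ ‖-y‖ := by rwa [norm_neg]
    rw [sub_eq_add_neg, sub_eq_add_neg, Padic.add_eq_max_of_ne h1,
      Padic.add_eq_max_of_ne h2, norm_neg, norm_neg, norm_schneiderF, norm_schneiderF]

end main

section final
variable {p : ℕ} [hp : Fact p.Prime]

lemma norm_sub_eq_same_digit (x y : ℚ_[p]) (hx : x ≠ 0) (hy : y ≠ 0)
    (hv : y.valuation = x.valuation) (hd : fdigit (1 / eps x) = fdigit (1 / eps y)) :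
    ‖x - y‖ = (p:ℝ) ^ (-x.valuation) * ‖tau x - tau y‖ := by
  rw [norm_sub_eq x y hx hy hv, ← hd]
  simp only [add_sub_add_left_eq_sub]
  rw [norm_sub_rev (tau y) (tau x)]

lemma key (n : ℕ) : ∀ x y : ℚ_[p], x ≠ 0 → y ≠ 0 → x ≠ y → ‖x‖ = ‖y‖ →
    ‖x‖ ≤ (p:ℝ) ^ n * ‖x - y‖ → ‖schneiderF x - schneiderF y‖ = ‖x - y‖ := by
  induction n with
  | zero =>
    intro x y hx hy hxy hnorm hb
    apply key_core x y hx hy hnorm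
    intro hd
    exfalso
    have hv := val_eq_of_norm_eq hx hy hnorm
    have hpv : (0:ℝ) < (p:ℝ) ^ (-x.valuation) := zpow_pos pR_pos _
    have hD : ‖tau x - tau y‖ ≤ (p:ℝ)⁻¹ :=
      norm_small_sub_small (norm_tau_le x) (norm_tau_le y)
    rw [pow_zero, one_mul, norm_sub_eq_same_digit x y hx hy hv hd,
      Padic.norm_eq_zpow_neg_valuation hx] at hb
    have h1 : (p:ℝ) ^ (-x.valuation) * ‖tau x - tau y‖ ≤ (p:ℝ) ^ (-x.valuation) * (p:ℝ)⁻¹ :=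
      mul_le_mul_of_nonneg_left hD (le_of_lt hpv)
    have h2 : (p:ℝ) ^ (-x.valuation) * (p:ℝ)⁻¹ < (p:ℝ) ^ (-x.valuation) * 1 :=
      mul_lt_mul_of_pos_left (inv_lt_one_of_one_lt₀ pR_one_lt) hpv
    rw [mul_one] at h2
    linarith
  | succ n IH =>
    intro x y hx hy hxy hnorm hb
    apply key_core x y hx hy hnorm
    intro hd
    apply aux_cases
    intro h1 h2 h3 h4
    apply IH _ _ h1 h2 h3 h4
    have hv := val_eq_of_norm_eq hx hy hnorm
    have hpv : (0:ℝ) < (p:ℝ) ^ (-x.valuation) := zpow_pos pR_pos _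
    set D := ‖tau x - tau y‖ with hDdef
    rw [norm_sub_eq_same_digit x y hx hy hv hd, Padic.norm_eq_zpow_neg_valuation hx] at hb
    have h5 : (1:ℝ) ≤ (p:ℝ) ^ (n+1) * D := by
      rw [show (p:ℝ) ^ (n+1) * ((p:ℝ) ^ (-x.valuation) * D)
          = (p:ℝ) ^ (-x.valuation) * ((p:ℝ) ^ (n+1) * D) by ring] at hb
      nth_rewrite 1 [← mul_one ((p:ℝ) ^ (-x.valuation))] at hb
      exact le_of_mul_le_mul_left hb hpv
    have hp0 : (p:ℝ) ≠ 0 := ne_of_gt pR_pos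
    calc ‖tau x‖ ≤ (p:ℝ)⁻¹ := norm_tau_le x
      _ = 1 * (p:ℝ)⁻¹ := (one_mul _).symm
      _ ≤ ((p:ℝ) ^ (n+1) * D) * (p:ℝ)⁻¹ := by
          apply mul_le_mul_of_nonneg_right h5 (by positivity)
      _ = (p:ℝ) ^ n * D := by
          rw [pow_succ]
          field_simp

end final

theorem schneiderF_isometry (p : ℕ) [Fact p.Prime] (x y : ℚ_[p]) :
    ‖schneiderF x - schneiderF y‖ = ‖x - y‖ := by
  apply aux_cases
  intro hx hy hxy hnorm
  have hpos : 0 < ‖x - y‖ := norm_pos_iff.mpr (sub_ne_zero.mpr hxy)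
  obtain ⟨n, hn2⟩ := pow_unbounded_of_one_lt (‖x‖ / ‖x - y‖) (pR_one_lt (p := p))
  apply key n x y hx hy hxy hnorm
  rw [div_lt_iff₀ hpos] at hn2
  linarith
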